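/- The Auslander algebra A_t of K[x]/(x^t) is isomorphic to the bound path algebra of the quiver with vertices 1,...,t, arrows a_i : i → i+1 and b_i : i+1 → i for 1 ≤ i ≤ t−1, modulo the relations a_1 b_1 = 0 and a_{i+1} b_{i+1} = b_i a_i for 1 ≤ i ≤ t−2. -/

import Mathlib

set_option maxHeartbeats 1000000
set_option synthInstance.maxHeartbeats 400000
open CategoryTheory CategoryTheory.Limits

noncomputable section
namespace Paper

variable (K : Type) [Field K]

abbrev Mq (t : ℕ) (i : Fin t) : Type :=
  Polynomial K ⧸ Ideal.span ({Polynomial.X ^ ((i : ℕ) + 1)} : Set (Polynomial K))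

abbrev Nmod (t : ℕ) : Type := ∀ i : Fin t, Mq K t i

/-- The Auslander algebra of `K[x]/(x^t)`, i.e. the endomorphism algebra of
`⊕_{i=1}^{t} K[x]/(x^i)`. -/
def Aus (t : ℕ) : Type := Module.End (Polynomial K) (Nmod K t)

instance (t : ℕ) : Ring (Aus K t) :=
  inferInstanceAs (Ring (Module.End (Polynomial K) (Nmod K t)))

instance (t : ℕ) : Algebra (Polynomial K) (Aus K t) :=
  inferInstanceAs (Algebra (Polynomial K) (Module.End (Polynomial K) (Nmod K t)))

instance (t : ℕ) : Algebra K (Aus K t) :=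
  Algebra.compHom (Aus K t) (algebraMap K (Polynomial K))

abbrev Mod' (_K : Type) (B : Type) [Ring B] : Type 1 := ModuleCat.{0} Bᵐᵒᵖ

variable (t : ℕ)

/-- The idempotent `e_i ∈ A_t`: projection onto the `i`-th summand `M(i)`. -/
def idem (i : Fin t) : Aus K t :=
  (LinearMap.single (Polynomial K) (Mq K t) i).comp (LinearMap.proj i)

/-- Left multiplication by `a` as an endomorphism of `A_t` as a right module over itself. -/
def lmul (a : Aus K t) : Aus K t →ₗ[(Aus K t)ᵐᵒᵖ] Aus K t where
  toFun x := a * x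
  map_add' := mul_add a
  map_smul' c x := by
    simp [MulOpposite.smul_eq_mul_unop, mul_assoc]

/-- `A_t` as a right module over itself. -/
def AusObj : Mod' K (Aus K t) := ModuleCat.of (Aus K t)ᵐᵒᵖ (Aus K t)

/-- The indecomposable projective right module `P(i) = e_i A_t`. -/
def Psub (i : Fin t) : Submodule (Aus K t)ᵐᵒᵖ (Aus K t) := LinearMap.range (lmul K t (idem K t i))

def Pobj (i : Fin t) : Mod' K (Aus K t) := ModuleCat.of (Aus K t)ᵐᵒᵖ (Psub K t i)

/-- multiplication by `x`, the canonical irreducible monomorphism `M(j) → M(i)`, `i = j+1`. -/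
def xmulStep (j i : Fin t) (h : (j : ℕ) + 1 = (i : ℕ)) :
    Mq K t j →ₗ[Polynomial K] Mq K t i :=
  Submodule.mapQ (Ideal.span ({Polynomial.X ^ ((j : ℕ) + 1)} : Set (Polynomial K)))
    (Ideal.span ({Polynomial.X ^ ((i : ℕ) + 1)} : Set (Polynomial K)))
    (LinearMap.mulLeft (Polynomial K) Polynomial.X)
    (by
      refine Submodule.span_le.2 (Set.singleton_subset_iff.2 ?_)
      rw [SetLike.mem_coe, Submodule.mem_comap]
      have hx : (LinearMap.mulLeft (Polynomial K) Polynomial.X) ((Polynomial.X : Polynomial K) ^ ((j : ℕ) + 1))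
          = Polynomial.X ^ ((i : ℕ) + 1) := by
        rw [LinearMap.mulLeft_apply, ← h, pow_succ]
        ring
      rw [hx]
      exact Ideal.subset_span (Set.mem_singleton _))

/-- the arrow `b : i → i-1` of the quiver of `A_t`, realised as the element of
`e_i A_t e_{i-1}` given by the canonical irreducible monomorphism `M(i-1) → M(i)`. -/
def arrB (j i : Fin t) (h : (j : ℕ) + 1 = (i : ℕ)) : Aus K t :=
  (LinearMap.single (Polynomial K) (Mq K t) i).comp
    ((xmulStep K t j i h).comp (LinearMap.proj j))

theorem idem_mul_arrB (j i : Fin t) (h : (j : ℕ) + 1 = (i : ℕ)) :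
    idem K t i * arrB K t j i h = arrB K t j i h := by
  apply LinearMap.ext
  intro v
  change (@id (Module.End (Polynomial K) (Nmod K t)) (idem K t i)) ((@id (Module.End (Polynomial K) (Nmod K t)) (arrB K t j i h)) v) = _
  dsimp only [id]
  simp only [idem, arrB, LinearMap.comp_apply, LinearMap.proj_apply, LinearMap.coe_single,
    Pi.single_eq_same]

theorem arrB_mul_idem (j i : Fin t) (h : (j : ℕ) + 1 = (i : ℕ)) :
    arrB K t j i h * idem K t j = arrB K t j i h := by
  apply LinearMap.ext
  intro v
  change (@id (Module.End (Polynomial K) (Nmod K t)) (arrB K t j i h)) ((@id (Module.End (Polynomial K) (Nmod K t)) (idem K t j)) v) = _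
  dsimp only [id]
  simp only [idem, arrB, LinearMap.comp_apply, LinearMap.proj_apply, LinearMap.coe_single,
    Pi.single_eq_same]


section Generic

variable (B : Type) [Ring B] [Algebra K B]

instance : Linear K (Mod' K B) := ModuleCat.linearOverField

/-- Finite dimensionality (equivalently, finiteness over the f.d. algebra `B`). -/
abbrev FD (M : Mod' K B) : Prop := Module.Finite Bᵐᵒᵖ M

/-- `mod B`: the collection of finite dimensional modules. -/
def fdSub : Set (Mod' K B) := {M | FD K B M}

/-- Ext groups, as `K`-modules. -/
abbrev EXT (n : ℕ) (M N : Mod' K B) : ModuleCat K :=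
  ((Ext K (Mod' K B) n).obj (Opposite.op M)).obj N

/-- dimension of a Hom-space over `K`. -/
abbrev homDim (M N : Mod' K B) : ℕ := Module.finrank K (M ⟶ N)

/-- a short exact sequence `0 → X → Y → Z → 0`. -/
def IsSES {X Y Z : Mod' K B} (f : X ⟶ Y) (g : Y ⟶ Z) : Prop :=
  Mono f ∧ Epi g ∧ ∃ w : f ≫ g = 0, (ShortComplex.mk f g w).Exact

/-- projective dimension at most one. -/
def PdimLE1 (M : Mod' K B) : Prop :=
  ∃ (P₀ P₁ : Mod' K B) (_ : Projective P₀) (_ : Projective P₁)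
    (f : P₁ ⟶ P₀) (g : P₀ ⟶ M), IsSES K B f g

/-- direct summand. -/
def Summand (X M : Mod' K B) : Prop := ∃ (s : X ⟶ M) (r : M ⟶ X), s ≫ r = 𝟙 X

/-- indecomposable object. -/
def Indec (M : Mod' K B) : Prop :=
  ¬ IsZero M ∧ ∀ X Y : Mod' K B, Nonempty (M ≅ X ⊞ Y) → IsZero X ∨ IsZero Y

/-- `M ∈ Gen X`: `M` is a quotient of a finite direct sum of copies of `X`. -/
def InGen (X M : Mod' K B) : Prop :=
  ∃ (n : ℕ) (g : ModuleCat.of Bᵐᵒᵖ (Fin n → X) ⟶ M), Epi g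

/-- `N` is the torsion-free quotient `f_X(M)` w.r.t. the torsion pair `(Gen X, X^⊥)`. -/
def IsTFQuot (X M N : Mod' K B) : Prop :=
  ∃ (TM : Mod' K B) (f : TM ⟶ M) (g : M ⟶ N),
    IsSES K B f g ∧ InGen K B X TM ∧ ∀ h : X ⟶ N, h = 0

/-- An almost split (Auslander–Reiten) sequence `0 → N → E → M → 0` within a subcategory `S`. -/
def IsARSeq (S : Set (Mod' K B)) {N E M : Mod' K B} (f : N ⟶ E) (g : E ⟶ M) : Prop :=
  N ∈ S ∧ E ∈ S ∧ M ∈ S ∧ IsSES K B f g ∧ Indec K B N ∧ Indec K B M ∧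
    (¬ ∃ s : M ⟶ E, s ≫ g = 𝟙 M) ∧
    (∀ Z ∈ S, ∀ h : Z ⟶ M, (¬ ∃ s : M ⟶ Z, s ≫ h = 𝟙 M) → ∃ k : Z ⟶ E, k ≫ g = h)

/-- `N` is the Auslander–Reiten translate `τ M` inside the subcategory `S`
(in particular `M` is indecomposable and not projective in `S`). -/
def IsTauTr (S : Set (Mod' K B)) (N M : Mod' K B) : Prop :=
  ∃ (E : Mod' K B) (f : N ⟶ E) (g : E ⟶ M), IsARSeq K B S f g

/-- `Hom(M, τ M) = 0` within `S`; `τ` of a projective summand is zero, so only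
non-projective indecomposable summands (those admitting an AR sequence) contribute. -/
def TauRigid (S : Set (Mod' K B)) (M : Mod' K B) : Prop :=
  M ∈ S ∧ ∀ M₁ M₂ N : Mod' K B, Summand K B M₁ M → Summand K B M₂ M →
    IsTauTr K B S N M₂ → ∀ f : M₁ ⟶ N, f = 0

/-- the τ-perpendicular category `J(X) = X^⊥ ∩ ^⊥(τ X)` relative to `S`. -/
def Jcat (S : Set (Mod' K B)) (X : Mod' K B) : Set (Mod' K B) :=
  {M | M ∈ S ∧ (∀ f : X ⟶ M, f = 0) ∧
    ∀ X₂ N : Mod' K B, Summand K B X₂ X → IsTauTr K B S N X₂ → ∀ g : M ⟶ N, g = 0}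

/-- iterated τ-perpendicular category `J(M_i, …, M_1)` (list given as `[M_1, M_2, …]`). -/
def Jlist (S : Set (Mod' K B)) : List (Mod' K B) → Set (Mod' K B)
  | [] => S
  | M :: L => Jlist (Jcat K B S M) L

/-- `(…, M_2, M_1)`, listed as `[M_1, M_2, …]`, is a τ-exceptional sequence in `S`. -/
def IsTauExcList (S : Set (Mod' K B)) : List (Mod' K B) → Prop
  | [] => True
  | M :: L => M ∈ S ∧ FD K B M ∧ Indec K B M ∧ TauRigid K B S M ∧
      IsTauExcList (Jcat K B S M) L

/-- `E 0 = M_1, …, E (n-1) = M_n` is a τ-exceptional sequence in `mod B`. -/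
def IsTauExcSeq {n : ℕ} (E : Fin n → Mod' K B) : Prop :=
  IsTauExcList K B (fdSub K B) (List.ofFn E)

/-- exceptional module: f.d., no self-extensions, endomorphism algebra `K`. -/
def IsExc (M : Mod' K B) : Prop :=
  FD K B M ∧ (∀ n : ℕ, 1 ≤ n → Subsingleton (EXT K B n M M)) ∧
    Module.finrank K (M ⟶ M) = 1

/-- `E 0 = E_1, …, E (n-1) = E_n` is an exceptional sequence. -/
def IsExcSeq {n : ℕ} (E : Fin n → Mod' K B) : Prop :=
  (∀ i, IsExc K B (E i)) ∧
    ∀ i j : Fin n, i < j →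
      (∀ f : E i ⟶ E j, f = 0) ∧ ∀ ℓ : ℕ, 1 ≤ ℓ → Subsingleton (EXT K B ℓ (E i) (E j))

/-- the biproduct of the first `i` members of an ordered family. -/
def prevSum {r : ℕ} (D : Fin r → Mod' K B) (i : Fin r) : Mod' K B :=
  ⨁ (fun j : Fin (i : ℕ) => D (Fin.castLE i.isLt.le j))

/-- TF-ordered family. -/
def TFOrdered {r : ℕ} (D : Fin r → Mod' K B) : Prop :=
  ∀ i : Fin r, 1 ≤ (i : ℕ) → ¬ InGen K B (prevSum K B D i) (D i)

/-- partial tilting module. -/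
def IsPartialTilting (M : Mod' K B) : Prop :=
  FD K B M ∧ PdimLE1 K B M ∧ ∀ n : ℕ, 1 ≤ n → Subsingleton (EXT K B n M M)

/-- a basic tilting module with `r` indecomposable summands, given with its decomposition. -/
def IsBasicTiltingFam {r : ℕ} (D : Fin r → Mod' K B) : Prop :=
  IsPartialTilting K B (⨁ D) ∧ (∀ i, Indec K B (D i)) ∧
    ∀ i j : Fin r, i ≠ j → ¬ Nonempty (D i ≅ D j)

/-- a basic tilting module (with `r` pairwise non-isomorphic indecomposable summands). -/
def IsBasicTilting (r : ℕ) (T : Mod' K B) : Prop :=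
  ∃ D : Fin r → Mod' K B, Nonempty (T ≅ ⨁ D) ∧ IsBasicTiltingFam K B D

/-- `E` is the image `Φ(D)` of the ordered decomposition `D` under the
Mendoza–Treffinger map, i.e. `E_1 = D_1` and `E_i = f_{D_{i-1} ⊕ ⋯ ⊕ D_1}(D_i)`. -/
def IsPhiImage {r : ℕ} (D E : Fin r → Mod' K B) : Prop :=
  (∀ i : Fin r, 1 ≤ (i : ℕ) → IsTFQuot K B (prevSum K B D i) (D i) (E i)) ∧
    ∀ h : 0 < r, Nonempty (E ⟨0, h⟩ ≅ D ⟨0, h⟩)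

/-- a (minimal) right `add X`-approximation: every map from `X` factors through `f`,
and `f` is right minimal. -/
def IsMinRightApprox (X : Mod' K B) {X' M : Mod' K B} (f : X' ⟶ M) : Prop :=
  (∀ g : X ⟶ M, ∃ k : X ⟶ X', k ≫ f = g) ∧
    ∀ φ : X' ⟶ X', φ ≫ f = f → IsIso φ

/-- Jacobson radical of a module. -/
def radSub (M : Mod' K B) : Submodule Bᵐᵒᵖ M :=
  (⊥ : Ideal Bᵐᵒᵖ).jacobson • (⊤ : Submodule Bᵐᵒᵖ M)

/-- the top `M/rad M` of a module. -/
def topObj (M : Mod' K B) : Mod' K B :=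
  ModuleCat.of Bᵐᵒᵖ (M ⧸ radSub K B M)

/-- projective object relative to a subcategory `S`. -/
def ProjIn (S : Set (Mod' K B)) (P : Mod' K B) : Prop :=
  P ∈ S ∧ ∀ X ∈ S, ∀ Y ∈ S, ∀ g : X ⟶ Y, Epi g → ∀ h : P ⟶ Y, ∃ k : P ⟶ X, k ≫ g = h

/-- `Ext^1` vanishing relative to an (extension-closed, wide) subcategory `S`:
every short exact sequence `0 → N → Y → M → 0` with `Y ∈ S` splits. -/
def Ext1VanIn (S : Set (Mod' K B)) (M N : Mod' K B) : Prop :=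
  ∀ (Y : Mod' K B), Y ∈ S → ∀ (f : N ⟶ Y) (g : Y ⟶ M), IsSES K B f g →
    ∃ s : M ⟶ Y, s ≫ g = 𝟙 M

/-- projective dimension at most one relative to a subcategory `S`. -/
def PdimLE1In (S : Set (Mod' K B)) (M : Mod' K B) : Prop :=
  ∃ (P₀ P₁ : Mod' K B) (_ : ProjIn K B S P₀) (_ : ProjIn K B S P₁)
    (f : P₁ ⟶ P₀) (g : P₀ ⟶ M), IsSES K B f g

/-- a basic tilting object of a subcategory `S`, with `r` summands. -/
def IsBasicTiltingIn (S : Set (Mod' K B)) (r : ℕ) (T : Mod' K B) : Prop :=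
  T ∈ S ∧ PdimLE1In K B S T ∧ Ext1VanIn K B S T T ∧
    ∃ D : Fin r → Mod' K B, Nonempty (T ≅ ⨁ D) ∧ (∀ i, D i ∈ S ∧ Indec K B (D i)) ∧
      ∀ i j : Fin r, i ≠ j → ¬ Nonempty (D i ≅ D j)


end Generic

section TiltDecomp

variable (t : ℕ)

/-- `T_i = e_i T`, for a right ideal `T` which is also left stable. -/
def Tpart (T : Submodule (Aus K t)ᵐᵒᵖ (Aus K t)) (i : Fin t) :
    Submodule (Aus K t)ᵐᵒᵖ (Aus K t) := T.map (lmul K t (idem K t i))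

def Tobj (T : Submodule (Aus K t)ᵐᵒᵖ (Aus K t)) (i : Fin t) : Mod' K (Aus K t) :=
  ModuleCat.of (Aus K t)ᵐᵒᵖ (Tpart K t T i)

/-- `T` is stable under left multiplication (e.g. a two-sided ideal). -/
def LeftStable (T : Submodule (Aus K t)ᵐᵒᵖ (Aus K t)) : Prop :=
  ∀ a : Aus K t, ∀ x ∈ T, a * x ∈ T

/-- `h_{i-1} : T_{i-1} → T_i`, given by left multiplication by the arrow `b_i : i → i-1`. -/
def hmor {T : Submodule (Aus K t)ᵐᵒᵖ (Aus K t)} (hT : LeftStable K t T)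
    (j i : Fin t) (h : (j : ℕ) + 1 = (i : ℕ)) : Tobj K t T j ⟶ Tobj K t T i :=
  ModuleCat.ofHom
    ((lmul K t (arrB K t j i h)).restrict
      (p := Tpart K t T j) (q := Tpart K t T i)
      (by
        intro x hx
        rcases Submodule.mem_map.1 hx with ⟨y, hy, rfl⟩
        refine Submodule.mem_map.2
          ⟨arrB K t j i h * (idem K t j * y), hT _ _ (hT _ _ hy), ?_⟩
        show idem K t i * (arrB K t j i h * (idem K t j * y))
            = arrB K t j i h * ((lmul K t (idem K t j)) y)
        rw [← mul_assoc, idem_mul_arrB]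
        rfl))

/-- the `i`-th entry of the dimension vector of a right module `M`, i.e. `dim_K (M e_i)`. -/
def vdim (i : Fin t) (M : Mod' K (Aus K t)) : ℕ := by
  classical
  letI : Module K M := ModuleCat.moduleOfAlgebraModule M
  haveI : IsScalarTower K (Aus K t)ᵐᵒᵖ M := ModuleCat.isScalarTower_of_algebra_moduleCat M
  exact Module.finrank K (LinearMap.range
    ({ toFun := fun m => (MulOpposite.op (idem K t i)) • m
       map_add' := fun a b => smul_add _ a b
       map_smul' := fun k m => by
         simp only [RingHom.id_apply]
         rw [algebra_compatible_smul ((Aus K t)ᵐᵒᵖ) k m, smul_smul,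
           ← Algebra.commutes k (MulOpposite.op (idem K t i)), ← smul_smul,
           ← algebra_compatible_smul] } : M →ₗ[K] M))

/-- thin module: all entries of the dimension vector are `0` or `1`. -/
def IsThin (M : Mod' K (Aus K t)) : Prop := ∀ i : Fin t, vdim K t i M ≤ 1

end TiltDecomp

section BoundQuiver

/-- generators of the bound quiver algebra of `A_t`: vertex idempotents `e i`, arrows
`a i : i → i+1` and `b i : i+1 → i`. -/
inductive BGen (t : ℕ) : Type
  | e : Fin t → BGen t
  | a : Fin (t - 1) → BGen t
  | b : Fin (t - 1) → BGen t

/-- source vertex of the `i`-th pair of arrows. -/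
def vsrc (t : ℕ) (i : Fin (t - 1)) : Fin t :=
  ⟨(i : ℕ), lt_of_lt_of_le i.isLt (Nat.sub_le t 1)⟩

/-- target vertex of the `i`-th pair of arrows. -/
def vtgt (t : ℕ) (i : Fin (t - 1)) : Fin t :=
  ⟨(i : ℕ) + 1, by have := i.isLt; omega⟩

variable (t : ℕ)

/-- the defining relations of the bound quiver algebra: the `e i` are orthogonal idempotents
summing to `1`, the arrows `a i : i → i+1` and `b i : i+1 → i` are compatible with them,
and `a_1 b_1 = 0`, `a_(i+1) b_(i+1) = b_i a_i` (products written as path compositions). -/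
inductive BRel : FreeAlgebra K (BGen t) → FreeAlgebra K (BGen t) → Prop
  | idem (i : Fin t) :
      BRel (FreeAlgebra.ι K (BGen.e i) * FreeAlgebra.ι K (BGen.e i)) (FreeAlgebra.ι K (BGen.e i))
  | orth (i j : Fin t) (h : i ≠ j) :
      BRel (FreeAlgebra.ι K (BGen.e i) * FreeAlgebra.ι K (BGen.e j)) 0
  | sum_idem : BRel (∑ i : Fin t, FreeAlgebra.ι K (BGen.e i)) 1
  | a_src (i : Fin (t - 1)) :
      BRel (FreeAlgebra.ι K (BGen.e (vsrc t i)) * FreeAlgebra.ι K (BGen.a i))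
        (FreeAlgebra.ι K (BGen.a i))
  | a_tgt (i : Fin (t - 1)) :
      BRel (FreeAlgebra.ι K (BGen.a i) * FreeAlgebra.ι K (BGen.e (vtgt t i)))
        (FreeAlgebra.ι K (BGen.a i))
  | b_src (i : Fin (t - 1)) :
      BRel (FreeAlgebra.ι K (BGen.e (vtgt t i)) * FreeAlgebra.ι K (BGen.b i))
        (FreeAlgebra.ι K (BGen.b i))
  | b_tgt (i : Fin (t - 1)) :
      BRel (FreeAlgebra.ι K (BGen.b i) * FreeAlgebra.ι K (BGen.e (vsrc t i)))
        (FreeAlgebra.ι K (BGen.b i))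
  | rel_zero (h0 : 0 < t - 1) :
      BRel (FreeAlgebra.ι K (BGen.a ⟨0, h0⟩) * FreeAlgebra.ι K (BGen.b ⟨0, h0⟩)) 0
  | rel_comm (i j : Fin (t - 1)) (h : (i : ℕ) + 1 = (j : ℕ)) :
      BRel (FreeAlgebra.ι K (BGen.a j) * FreeAlgebra.ι K (BGen.b j))
        (FreeAlgebra.ι K (BGen.b i) * FreeAlgebra.ι K (BGen.a i))

/-- the bound path algebra of the quiver of `A_t` modulo its relations. -/
def BoundAlg : Type := RingQuot (BRel K t)

instance : Ring (BoundAlg K t) := inferInstanceAs (Ring (RingQuot (BRel K t)))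

instance : Algebra K (BoundAlg K t) := inferInstanceAs (Algebra K (RingQuot (BRel K t)))

end BoundQuiver

end Paper
namespace AusProof

open Paper Polynomial

variable (K : Type) [Field K] (t : ℕ)

/-- the canonical map `M(j+1) → M(i+1)` given by multiplication by `X^(s + (i-j))`. -/
def mm (i j : Fin t) (s : ℕ) : Mq K t j →ₗ[Polynomial K] Mq K t i :=
  Submodule.mapQ _ _ (LinearMap.mulLeft (Polynomial K) (X ^ (s + ((i : ℕ) - (j : ℕ)))))
    (by
      refine Ideal.span_le.2 (Set.singleton_subset_iff.2 ?_)
      rw [SetLike.mem_coe, Submodule.mem_comap, LinearMap.mulLeft_apply, ← pow_add]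
      exact Ideal.mem_span_singleton.2 (pow_dvd_pow _ (by omega)))

lemma mm_mk (i j : Fin t) (s : ℕ) (p : Polynomial K) :
    mm K t i j s (Submodule.Quotient.mk p)
      = Submodule.Quotient.mk (X ^ (s + ((i : ℕ) - (j : ℕ))) * p) := by
  simp only [mm, Submodule.mapQ_apply, LinearMap.mulLeft_apply]

lemma mm_comp (i j l : Fin t) (s s' S : ℕ)
    (h : s + ((i : ℕ) - (j : ℕ)) + (s' + ((j : ℕ) - (l : ℕ))) = S + ((i : ℕ) - (l : ℕ))) :
    (mm K t i j s).comp (mm K t j l s') = mm K t i l S := by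
  refine Submodule.linearMap_qext _ (LinearMap.ext fun p => ?_)
  simp only [LinearMap.comp_apply, Submodule.mkQ_apply, mm_mk]
  rw [← mul_assoc, ← pow_add, h]

lemma mm_zero (i j : Fin t) (s : ℕ) (h : (i : ℕ) + 1 ≤ s + ((i : ℕ) - (j : ℕ))) :
    mm K t i j s = 0 := by
  refine Submodule.linearMap_qext _ (LinearMap.ext fun p => ?_)
  simp only [LinearMap.comp_apply, Submodule.mkQ_apply, mm_mk, LinearMap.zero_comp,
    LinearMap.zero_apply]
  rw [Submodule.Quotient.mk_eq_zero]
  exact Ideal.mul_mem_right _ _ (Ideal.mem_span_singleton.2 (pow_dvd_pow _ h))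

lemma mm_id (i : Fin t) : mm K t i i 0 = LinearMap.id := by
  refine Submodule.linearMap_qext _ (LinearMap.ext fun p => ?_)
  simp only [LinearMap.comp_apply, Submodule.mkQ_apply, mm_mk, LinearMap.id_comp]
  rw [Nat.sub_self, pow_zero, one_mul]

/-- the element `e_i ∘ (x^(s + (i-j))· ) ∘ e_j` of the Auslander algebra. -/
def FF (i j : Fin t) (s : ℕ) : Aus K t :=
  (LinearMap.single (Polynomial K) (Mq K t) i).comp ((mm K t i j s).comp (LinearMap.proj j))

lemma FF_mul (i j l : Fin t) (s s' S : ℕ)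
    (h : s + ((i : ℕ) - (j : ℕ)) + (s' + ((j : ℕ) - (l : ℕ))) = S + ((i : ℕ) - (l : ℕ))) :
    FF K t i j s * FF K t j l s' = FF K t i l S := by
  apply LinearMap.ext
  intro v
  change (@id (Module.End (Polynomial K) (Nmod K t)) (FF K t i j s)) ((@id (Module.End (Polynomial K) (Nmod K t)) (FF K t j l s')) v) = _
  dsimp only [id]
  simp only [FF, LinearMap.comp_apply, LinearMap.proj_apply, LinearMap.coe_single,
    Pi.single_eq_same]
  rw [← mm_comp K t i j l s s' S h, LinearMap.comp_apply]

lemma FF_mul_ne (i j j' l : Fin t) (s s' : ℕ) (h : j ≠ j') :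
    FF K t i j s * FF K t j' l s' = 0 := by
  apply LinearMap.ext
  intro v
  change (@id (Module.End (Polynomial K) (Nmod K t)) (FF K t i j s)) ((@id (Module.End (Polynomial K) (Nmod K t)) (FF K t j' l s')) v) = _
  dsimp only [id]
  simp only [FF, LinearMap.comp_apply, LinearMap.proj_apply, LinearMap.coe_single]
  rw [Pi.single_eq_of_ne h, map_zero, Pi.single_zero]
  rfl

lemma FF_zero (i j : Fin t) (s : ℕ) (h : (i : ℕ) + 1 ≤ s + ((i : ℕ) - (j : ℕ))) :
    FF K t i j s = 0 := by
  apply LinearMap.ext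
  intro v
  simp only [FF, LinearMap.comp_apply, mm_zero K t i j s h, LinearMap.zero_apply,
    LinearMap.coe_single, Pi.single_zero]
  rfl

lemma FF_sum : ∑ i : Fin t, FF K t i i 0 = 1 := by
  apply LinearMap.ext
  intro v
  change (∑ i : Fin t, @id (Module.End (Polynomial K) (Nmod K t)) (FF K t i i 0)) v = (1 : Module.End (Polynomial K) (Nmod K t)) v
  rw [LinearMap.sum_apply]
  dsimp only [id]
  simp only [FF, LinearMap.comp_apply, LinearMap.proj_apply, LinearMap.coe_single, mm_id,
    LinearMap.id_apply]
  rw [Finset.univ_sum_single]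
  rfl

end AusProof
namespace BProof

open Paper

variable (K : Type) [Field K] (t : ℕ)

/-- shorthand for the quotient map. -/
def mkA : FreeAlgebra K (BGen t) →ₐ[K] BoundAlg K t := RingQuot.mkAlgHom K (BRel K t)

def eB (m : ℕ) (h : m < t) : BoundAlg K t := mkA K t (FreeAlgebra.ι K (BGen.e ⟨m, h⟩))

def aB (m : ℕ) (h : m + 1 < t) : BoundAlg K t :=
  mkA K t (FreeAlgebra.ι K (BGen.a ⟨m, by omega⟩))

def bB (m : ℕ) (h : m + 1 < t) : BoundAlg K t :=
  mkA K t (FreeAlgebra.ι K (BGen.b ⟨m, by omega⟩))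

lemma e_mul_e (m : ℕ) (h : m < t) : eB K t m h * eB K t m h = eB K t m h := by
  have := RingQuot.mkAlgHom_rel K (BRel.idem (K := K) (t := t) ⟨m, h⟩)
  rw [map_mul] at this
  exact this

lemma e_mul_e_ne (m m' : ℕ) (h : m < t) (h' : m' < t) (hne : m ≠ m') :
    eB K t m h * eB K t m' h' = 0 := by
  have := RingQuot.mkAlgHom_rel K
    (BRel.orth (K := K) (t := t) ⟨m, h⟩ ⟨m', h'⟩ (by simp [Fin.ext_iff, hne]))
  rw [map_mul, map_zero] at this
  exact this

lemma e_sum : ∑ i : Fin t, eB K t (i : ℕ) i.isLt = 1 := by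
  have := RingQuot.mkAlgHom_rel K (BRel.sum_idem (K := K) (t := t))
  rw [map_sum, map_one] at this
  exact this

lemma e_mul_a (m : ℕ) (h : m + 1 < t) : eB K t m (by omega) * aB K t m h = aB K t m h := by
  have := RingQuot.mkAlgHom_rel K (BRel.a_src (K := K) (t := t) ⟨m, by omega⟩)
  rw [map_mul] at this
  exact this

lemma a_mul_e (m : ℕ) (h : m + 1 < t) : aB K t m h * eB K t (m + 1) h = aB K t m h := by
  have := RingQuot.mkAlgHom_rel K (BRel.a_tgt (K := K) (t := t) ⟨m, by omega⟩)
  rw [map_mul] at this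
  exact this

lemma e_mul_b (m : ℕ) (h : m + 1 < t) : eB K t (m + 1) h * bB K t m h = bB K t m h := by
  have := RingQuot.mkAlgHom_rel K (BRel.b_src (K := K) (t := t) ⟨m, by omega⟩)
  rw [map_mul] at this
  exact this

lemma b_mul_e (m : ℕ) (h : m + 1 < t) : bB K t m h * eB K t m (by omega) = bB K t m h := by
  have := RingQuot.mkAlgHom_rel K (BRel.b_tgt (K := K) (t := t) ⟨m, by omega⟩)
  rw [map_mul] at this
  exact this

lemma ab_zero (h : 1 < t) : aB K t 0 h * bB K t 0 h = 0 := by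
  have := RingQuot.mkAlgHom_rel K (BRel.rel_zero (K := K) (t := t) (by omega))
  rw [map_mul, map_zero] at this
  exact this

lemma ab_comm (m : ℕ) (h : m + 2 < t) :
    aB K t (m + 1) h * bB K t (m + 1) h = bB K t m (by omega) * aB K t m (by omega) := by
  have := RingQuot.mkAlgHom_rel K
    (BRel.rel_comm (K := K) (t := t) ⟨m, by omega⟩ ⟨m + 1, by omega⟩ rfl)
  rw [map_mul, map_mul] at this
  exact this

end BProof
namespace BProof

open Paper

variable (K : Type) [Field K] (t : ℕ)

def eT (m : ℕ) : BoundAlg K t := if h : m < t then eB K t m h else 0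

def aT (m : ℕ) : BoundAlg K t := if h : m + 1 < t then aB K t m h else 0

def bT (m : ℕ) : BoundAlg K t := if h : m + 1 < t then bB K t m h else 0

def loopT : ℕ → BoundAlg K t
  | 0 => 0
  | m + 1 => bT K t m * aT K t m

def ApT : (d : ℕ) → (i : ℕ) → BoundAlg K t
  | 0, i => eT K t i
  | d + 1, i => aT K t i * ApT d (i + 1)

def BpT : (d : ℕ) → (j : ℕ) → BoundAlg K t
  | 0, j => eT K t j
  | d + 1, j => bT K t (j + d) * BpT d j

def pT (i j : ℕ) : BoundAlg K t := if i ≤ j then ApT K t (j - i) i else BpT K t (i - j) j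

def nT (i j k : ℕ) : BoundAlg K t := loopT K t i ^ k * pT K t i j

lemma eT_mul_eT_self (m : ℕ) : eT K t m * eT K t m = eT K t m := by
  unfold eT; split_ifs with h
  · exact e_mul_e K t m h
  · simp

lemma eT_mul_eT_ne (m m' : ℕ) (hne : m ≠ m') : eT K t m * eT K t m' = 0 := by
  unfold eT; split_ifs with h h' h'
  · exact e_mul_e_ne K t m m' h h' hne
  all_goals simp

lemma loopT_succ (m : ℕ) : loopT K t (m + 1) = bT K t m * aT K t m := rfl

lemma ApT_succ (d i : ℕ) : ApT K t (d + 1) i = aT K t i * ApT K t d (i + 1) := rfl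

lemma BpT_succ (d j : ℕ) : BpT K t (d + 1) j = bT K t (j + d) * BpT K t d j := rfl

lemma eT_mul_aT (m : ℕ) : eT K t m * aT K t m = aT K t m := by
  by_cases h' : m + 1 < t
  · unfold eT aT; rw [dif_pos h', dif_pos (by omega : m < t)]; exact e_mul_a K t m h'
  · unfold aT; rw [dif_neg h', mul_zero]

lemma eT_mul_aT_ne (m m' : ℕ) (hne : m' ≠ m) : eT K t m' * aT K t m = 0 := by
  rw [← eT_mul_aT, ← mul_assoc, eT_mul_eT_ne K t m' m hne, zero_mul]

lemma aT_mul_eT (m : ℕ) : aT K t m * eT K t (m + 1) = aT K t m := by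
  by_cases h' : m + 1 < t
  · unfold eT aT; rw [dif_pos h', dif_pos h']; exact a_mul_e K t m h'
  · unfold aT; rw [dif_neg h', zero_mul]

lemma aT_mul_eT_ne (m m' : ℕ) (hne : m' ≠ m + 1) : aT K t m * eT K t m' = 0 := by
  rw [← aT_mul_eT, mul_assoc, eT_mul_eT_ne K t (m + 1) m' (fun h => hne h.symm), mul_zero]

lemma eT_mul_bT (m : ℕ) : eT K t (m + 1) * bT K t m = bT K t m := by
  by_cases h' : m + 1 < t
  · unfold eT bT; rw [dif_pos h', dif_pos h']; exact e_mul_b K t m h'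
  · unfold bT; rw [dif_neg h', mul_zero]

lemma eT_mul_bT_ne (m m' : ℕ) (hne : m' ≠ m + 1) : eT K t m' * bT K t m = 0 := by
  rw [← eT_mul_bT, ← mul_assoc, eT_mul_eT_ne K t m' (m + 1) hne, zero_mul]

lemma bT_mul_eT (m : ℕ) : bT K t m * eT K t m = bT K t m := by
  by_cases h' : m + 1 < t
  · unfold eT bT; rw [dif_pos h', dif_pos (by omega : m < t)]; exact b_mul_e K t m h'
  · unfold bT; rw [dif_neg h', zero_mul]

lemma bT_mul_eT_ne (m m' : ℕ) (hne : m' ≠ m) : bT K t m * eT K t m' = 0 := by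
  rw [← bT_mul_eT, mul_assoc, eT_mul_eT_ne K t m m' (fun h => hne h.symm), mul_zero]

lemma aT_mul_bT (m : ℕ) (h : m + 1 < t) : aT K t m * bT K t m = loopT K t m := by
  match m with
  | 0 =>
      show aT K t 0 * bT K t 0 = 0
      unfold aT bT; rw [dif_pos h, dif_pos h]; exact ab_zero K t h
  | m + 1 =>
      rw [loopT_succ]
      unfold aT bT
      rw [dif_pos h, dif_pos h, dif_pos (by omega : m + 1 < t), dif_pos (by omega : m + 1 < t)]
      exact ab_comm K t m h

lemma eT_mul_loopT (m : ℕ) : eT K t m * loopT K t m = loopT K t m := by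
  match m with
  | 0 => exact mul_zero _
  | m + 1 => rw [loopT_succ, ← mul_assoc, eT_mul_bT]

lemma eT_mul_loopT_ne (m m' : ℕ) (hne : m' ≠ m) : eT K t m' * loopT K t m = 0 := by
  match m with
  | 0 => exact mul_zero _
  | m + 1 => rw [loopT_succ, ← mul_assoc, eT_mul_bT_ne K t m m' hne, zero_mul]

lemma loopT_mul_eT (m : ℕ) : loopT K t m * eT K t m = loopT K t m := by
  match m with
  | 0 => exact zero_mul _
  | m + 1 => rw [loopT_succ, mul_assoc, aT_mul_eT]

lemma aT_loopT (m : ℕ) (h : m + 1 < t) :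
    aT K t m * loopT K t (m + 1) = loopT K t m * aT K t m := by
  rw [loopT_succ, ← mul_assoc, aT_mul_bT K t m h]

lemma loopT_bT (m : ℕ) (h : m + 1 < t) :
    loopT K t (m + 1) * bT K t m = bT K t m * loopT K t m := by
  rw [loopT_succ, mul_assoc, aT_mul_bT K t m h]

lemma aT_loopT_pow (m : ℕ) (h : m + 1 < t) (k : ℕ) :
    aT K t m * loopT K t (m + 1) ^ k = loopT K t m ^ k * aT K t m := by
  induction k with
  | zero => simp
  | succ k ih =>
      rw [pow_succ, ← mul_assoc, ih, mul_assoc, aT_loopT K t m h, ← mul_assoc, ← pow_succ]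

lemma loopT_pow_bT (m : ℕ) (h : m + 1 < t) (k : ℕ) :
    loopT K t (m + 1) ^ k * bT K t m = bT K t m * loopT K t m ^ k := by
  induction k with
  | zero => simp
  | succ k ih =>
      rw [pow_succ', mul_assoc, ih, ← mul_assoc, loopT_bT K t m h, mul_assoc, ← pow_succ']

lemma loopT_pow_zero (m : ℕ) (h : m < t) : loopT K t m ^ (m + 1) = 0 := by
  induction m with
  | zero => simp [loopT]
  | succ m ih =>
      have key : ∀ n : ℕ, (bT K t m * aT K t m) ^ (n + 1)
          = bT K t m * (aT K t m * bT K t m) ^ n * aT K t m := by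
        intro n
        induction n with
        | zero => simp
        | succ n ih2 =>
            rw [pow_succ, ih2, pow_succ]
            noncomm_ring
      rw [loopT_succ, key (m + 1), aT_mul_bT K t m h, ih (by omega), mul_zero, zero_mul]

lemma eT_mul_ApT (d i : ℕ) : eT K t i * ApT K t d i = ApT K t d i := by
  match d with
  | 0 => exact eT_mul_eT_self K t i
  | d + 1 => rw [ApT_succ, ← mul_assoc, eT_mul_aT]

lemma eT_mul_ApT_ne (d i m : ℕ) (hne : m ≠ i) : eT K t m * ApT K t d i = 0 := by
  match d with
  | 0 => exact eT_mul_eT_ne K t m i hne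
  | d + 1 => rw [ApT_succ, ← mul_assoc, eT_mul_aT_ne K t i m hne, zero_mul]

lemma eT_mul_BpT (d j : ℕ) : eT K t (j + d) * BpT K t d j = BpT K t d j := by
  match d with
  | 0 => exact eT_mul_eT_self K t j
  | d + 1 => rw [BpT_succ, ← Nat.add_assoc, ← mul_assoc, eT_mul_bT]

lemma eT_mul_BpT_ne (d j m : ℕ) (hne : m ≠ j + d) : eT K t m * BpT K t d j = 0 := by
  match d with
  | 0 => exact eT_mul_eT_ne K t m j hne
  | d + 1 => rw [BpT_succ, ← mul_assoc, eT_mul_bT_ne K t (j + d) m (by omega), zero_mul]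

lemma eT_mul_BpT' (d j m : ℕ) (hm : m = j + d) : eT K t m * BpT K t d j = BpT K t d j := by
  subst hm; exact eT_mul_BpT K t d j

lemma eT_mul_pT (i j : ℕ) : eT K t i * pT K t i j = pT K t i j := by
  unfold pT; split_ifs with h
  · exact eT_mul_ApT K t (j - i) i
  · exact eT_mul_BpT' K t (i - j) j i (by omega)

lemma eT_mul_pT_ne (i j m : ℕ) (hne : m ≠ i) : eT K t m * pT K t i j = 0 := by
  unfold pT; split_ifs with h
  · exact eT_mul_ApT_ne K t (j - i) i m hne
  · exact eT_mul_BpT_ne K t (i - j) j m (by omega)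

lemma eT_mul_nT (i j k : ℕ) : eT K t i * nT K t i j k = nT K t i j k := by
  unfold nT
  match k with
  | 0 => simp only [pow_zero, one_mul]; exact eT_mul_pT K t i j
  | k + 1 => rw [pow_succ', ← mul_assoc, ← mul_assoc, eT_mul_loopT]

lemma eT_mul_nT_ne (i j k m : ℕ) (hne : m ≠ i) : eT K t m * nT K t i j k = 0 := by
  unfold nT
  match k with
  | 0 => simp only [pow_zero, one_mul]; exact eT_mul_pT_ne K t i j m hne
  | k + 1 => rw [pow_succ', ← mul_assoc, ← mul_assoc, eT_mul_loopT_ne K t i m hne, zero_mul,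
      zero_mul]

lemma loopT_pow_BpT (d j s : ℕ) (h : j + d < t) :
    loopT K t (j + d) ^ s * BpT K t d j = BpT K t d j * loopT K t j ^ s := by
  induction d with
  | zero =>
      show loopT K t (j + 0) ^ s * eT K t j = eT K t j * loopT K t (j + 0) ^ s
      rw [Nat.add_zero]
      match s with
      | 0 => rw [pow_zero, one_mul, mul_one]
      | s + 1 =>
          rw [pow_succ, mul_assoc, loopT_mul_eT, ← pow_succ, pow_succ', ← mul_assoc,
            eT_mul_loopT, ← pow_succ']
  | succ d ih =>
      rw [BpT_succ, show j + (d + 1) = (j + d) + 1 from rfl, ← mul_assoc,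
        loopT_pow_bT K t (j + d) (by omega) s, mul_assoc, ih (by omega), ← mul_assoc]

end BProof
namespace BProof

open Paper

variable (K : Type) [Field K] (t : ℕ)

/-- index type for the normal basis: `i`, `j`, and `k < min (i+1) (j+1)`. -/
abbrev NIdx : Type := (i : Fin t) × (j : Fin t) × Fin (min ((i : ℕ) + 1) ((j : ℕ) + 1))

def NF (σ : NIdx t) : BoundAlg K t := nT K t σ.1 σ.2.1 σ.2.2

def NSpan : Submodule K (BoundAlg K t) := Submodule.span K (Set.range (NF K t))

lemma nT_mem (i j k : ℕ) (hi : i < t) (hj : j < t) (hk1 : k < i + 1) (hk2 : k < j + 1) :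
    nT K t i j k ∈ NSpan K t :=
  Submodule.subset_span ⟨⟨⟨i, hi⟩, ⟨j, hj⟩, ⟨k, by simp; omega⟩⟩, rfl⟩

lemma pT_eq_Ap (i j : ℕ) (h : i ≤ j) : pT K t i j = ApT K t (j - i) i := by
  unfold pT; rw [if_pos h]

lemma pT_eq_Bp (i j : ℕ) (h : j ≤ i) : pT K t i j = BpT K t (i - j) j := by
  unfold pT; split_ifs with h2
  · have hij : i = j := le_antisymm h2 h
    subst hij
    rw [Nat.sub_self]
    rfl
  · rfl

lemma loopT_pow_BpT' (d j s m : ℕ) (hm : m = j + d) (h : m < t) :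
    loopT K t m ^ s * BpT K t d j = BpT K t d j * loopT K t j ^ s := by
  subst hm; exact loopT_pow_BpT K t d j s h

lemma aT_mul_nT_mem (m i j k : ℕ) (hi : i < t) (hj : j < t) (hk1 : k < i + 1)
    (hk2 : k < j + 1) : aT K t m * nT K t i j k ∈ NSpan K t := by
  by_cases hr : m + 1 < t
  · by_cases hmi : m + 1 = i
    · subst hmi
      unfold nT
      rw [← mul_assoc, aT_loopT_pow K t m hr k, mul_assoc]
      by_cases hij : m + 1 ≤ j
      · rw [pT_eq_Ap K t (m + 1) j hij, ← ApT_succ, show (j - (m + 1)) + 1 = j - m by omega,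
          ← pT_eq_Ap K t m j (by omega)]
        by_cases hk : k < m + 1
        · exact nT_mem K t m j k (by omega) hj hk hk2
        · have hk' : k = m + 1 := by omega
          rw [hk', loopT_pow_zero K t m (by omega), zero_mul]
          exact zero_mem _
      · rw [pT_eq_Bp K t (m + 1) j (by omega), show m + 1 - j = (m - j) + 1 by omega, BpT_succ,
          show j + (m - j) = m by omega, ← mul_assoc (aT K t m), aT_mul_bT K t m hr,
          ← mul_assoc, ← pow_succ]
        by_cases hk : k + 1 < j + 1
        · rw [← pT_eq_Bp K t m j (by omega)]
          exact nT_mem K t m j (k + 1) (by omega) hj (by omega) hk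
        · have hk' : k + 1 = j + 1 := by omega
          rw [hk', loopT_pow_BpT' K t (m - j) j (j + 1) m (by omega) (by omega),
            loopT_pow_zero K t j hj, mul_zero]
          exact zero_mem _
    · rw [← aT_mul_eT, mul_assoc, eT_mul_nT_ne K t i j k (m + 1) hmi, mul_zero]
      exact zero_mem _
  · have : aT K t m = 0 := by unfold aT; rw [dif_neg hr]
    rw [this, zero_mul]
    exact zero_mem _

lemma bT_mul_nT_mem (m i j k : ℕ) (hi : i < t) (hj : j < t) (hk1 : k < i + 1)
    (hk2 : k < j + 1) : bT K t m * nT K t i j k ∈ NSpan K t := by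
  by_cases hr : m + 1 < t
  · by_cases hmi : m = i
    · subst hmi
      unfold nT
      rw [← mul_assoc, ← loopT_pow_bT K t m hr k, mul_assoc]
      by_cases hij : j ≤ m
      · rw [pT_eq_Bp K t m j hij,
          show bT K t m * BpT K t (m - j) j = BpT K t ((m - j) + 1) j by
            rw [BpT_succ, show j + (m - j) = m by omega],
          show (m - j) + 1 = (m + 1) - j by omega, ← pT_eq_Bp K t (m + 1) j (by omega)]
        exact nT_mem K t (m + 1) j k hr hj (by omega) hk2
      · rw [pT_eq_Ap K t m j (by omega), show j - m = (j - (m + 1)) + 1 by omega, ApT_succ,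
          ← mul_assoc (bT K t m), ← loopT_succ, ← mul_assoc, ← pow_succ,
          ← pT_eq_Ap K t (m + 1) j (by omega)]
        exact nT_mem K t (m + 1) j (k + 1) hr hj (by omega) (by omega)
    · rw [← bT_mul_eT, mul_assoc, eT_mul_nT_ne K t i j k m hmi, mul_zero]
      exact zero_mem _
  · have : bT K t m = 0 := by unfold bT; rw [dif_neg hr]
    rw [this, zero_mul]
    exact zero_mem _

lemma eT_mul_nT_mem (m i j k : ℕ) (hi : i < t) (hj : j < t) (hk1 : k < i + 1)
    (hk2 : k < j + 1) : eT K t m * nT K t i j k ∈ NSpan K t := by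
  by_cases hmi : m = i
  · subst hmi
    rw [eT_mul_nT]
    exact nT_mem K t m j k hi hj hk1 hk2
  · rw [eT_mul_nT_ne K t i j k m hmi]
    exact zero_mem _

lemma nT_self (i : ℕ) (h : i < t) : nT K t i i 0 = eT K t i := by
  unfold nT
  rw [pow_zero, one_mul, pT_eq_Ap K t i i le_rfl, Nat.sub_self]
  rfl

lemma one_mem_NSpan : (1 : BoundAlg K t) ∈ NSpan K t := by
  rw [← e_sum K t]
  refine Submodule.sum_mem _ fun i _ => ?_
  have h1 : eB K t (i : ℕ) i.isLt = nT K t i i 0 := by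
    rw [nT_self K t i i.isLt]
    unfold eT
    rw [dif_pos i.isLt]
  rw [h1]
  exact nT_mem K t i i 0 i.isLt i.isLt (by omega) (by omega)

lemma mkA_e (m : Fin t) : mkA K t (FreeAlgebra.ι K (BGen.e m)) = eT K t (m : ℕ) := by
  unfold eT
  rw [dif_pos m.isLt]
  rfl

lemma mkA_a (g : Fin (t - 1)) : mkA K t (FreeAlgebra.ι K (BGen.a g)) = aT K t (g : ℕ) := by
  unfold aT
  rw [dif_pos (by have := g.isLt; omega : (g : ℕ) + 1 < t)]
  rfl

lemma mkA_b (g : Fin (t - 1)) : mkA K t (FreeAlgebra.ι K (BGen.b g)) = bT K t (g : ℕ) := by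
  unfold bT
  rw [dif_pos (by have := g.isLt; omega : (g : ℕ) + 1 < t)]
  rfl

lemma gen_mul_mem (g : BGen t) (x : BoundAlg K t) (hx : x ∈ NSpan K t) :
    mkA K t (FreeAlgebra.ι K g) * x ∈ NSpan K t := by
  refine Submodule.span_induction ?_ ?_ ?_ ?_ hx
  · rintro y ⟨σ, rfl⟩
    have hk := σ.2.2.isLt
    have hi := σ.1.isLt
    have hj := σ.2.1.isLt
    rw [Nat.lt_min] at hk
    cases g with
    | e m => rw [mkA_e]; exact eT_mul_nT_mem K t m _ _ _ hi hj hk.1 hk.2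
    | a m => rw [mkA_a]; exact aT_mul_nT_mem K t m _ _ _ hi hj hk.1 hk.2
    | b m => rw [mkA_b]; exact bT_mul_nT_mem K t m _ _ _ hi hj hk.1 hk.2
  · rw [mul_zero]; exact zero_mem _
  · intro y z _ _ hy hz
    rw [mul_add]; exact add_mem hy hz
  · intro c y _ hy
    rw [mul_smul_comm]; exact Submodule.smul_mem _ c hy

lemma mul_mem_NSpan (y : BoundAlg K t) :
    ∀ x ∈ NSpan K t, y * x ∈ NSpan K t := by
  obtain ⟨z, rfl⟩ := RingQuot.mkAlgHom_surjective K (BRel K t) y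
  induction z using FreeAlgebra.induction with
  | grade0 r =>
      intro x hx
      rw [AlgHom.commutes]
      show algebraMap K (BoundAlg K t) r * x ∈ NSpan K t
      rw [← Algebra.smul_def]
      exact Submodule.smul_mem _ r hx
  | grade1 g => intro x hx; exact gen_mul_mem K t g x hx
  | mul a b ha hb =>
      intro x hx
      rw [map_mul]
      change (mkA K t a * mkA K t b) * x ∈ NSpan K t
      rw [mul_assoc]
      exact ha _ (hb x hx)
  | add a b ha hb =>
      intro x hx
      rw [map_add]
      change (mkA K t a + mkA K t b) * x ∈ NSpan K t
      rw [add_mul]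
      exact add_mem (ha x hx) (hb x hx)

lemma NSpan_top (x : BoundAlg K t) : x ∈ NSpan K t := by
  have := mul_mem_NSpan K t x 1 (one_mem_NSpan K t)
  rwa [mul_one] at this

end BProof
namespace BProof

open Paper AusProof

variable (K : Type) [Field K] (t : ℕ)

def genF : BGen t → Aus K t
  | BGen.e i => FF K t i i 0
  | BGen.a m => FF K t (vsrc t m) (vtgt t m) 0
  | BGen.b m => FF K t (vtgt t m) (vsrc t m) 0

def φ0 : FreeAlgebra K (BGen t) →ₐ[K] Aus K t := FreeAlgebra.lift K (genF K t)

lemma rel_apply : ∀ ⦃x y⦄, BRel K t x y → φ0 K t x = φ0 K t y := by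
  intro x y h
  induction h with
  | idem i =>
      simp only [φ0, map_mul, FreeAlgebra.lift_ι_apply, genF]
      exact FF_mul K t i i i 0 0 0 (by omega)
  | orth i j hij =>
      simp only [φ0, map_mul, map_zero, FreeAlgebra.lift_ι_apply, genF]
      exact FF_mul_ne K t i i j j 0 0 hij
  | sum_idem =>
      simp only [φ0, map_sum, map_one, FreeAlgebra.lift_ι_apply, genF]
      exact FF_sum K t
  | a_src i =>
      simp only [φ0, map_mul, FreeAlgebra.lift_ι_apply, genF]
      exact FF_mul K t (vsrc t i) (vsrc t i) (vtgt t i) 0 0 0 (by simp [vsrc, vtgt])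
  | a_tgt i =>
      simp only [φ0, map_mul, FreeAlgebra.lift_ι_apply, genF]
      exact FF_mul K t (vsrc t i) (vtgt t i) (vtgt t i) 0 0 0 (by simp [vsrc, vtgt])
  | b_src i =>
      simp only [φ0, map_mul, FreeAlgebra.lift_ι_apply, genF]
      exact FF_mul K t (vtgt t i) (vtgt t i) (vsrc t i) 0 0 0 (by simp [vsrc, vtgt])
  | b_tgt i =>
      simp only [φ0, map_mul, FreeAlgebra.lift_ι_apply, genF]
      exact FF_mul K t (vtgt t i) (vsrc t i) (vsrc t i) 0 0 0 (by simp [vsrc, vtgt])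
  | rel_zero h0 =>
      simp only [φ0, map_mul, map_zero, FreeAlgebra.lift_ι_apply, genF]
      rw [FF_mul K t (vsrc t ⟨0, h0⟩) (vtgt t ⟨0, h0⟩) (vsrc t ⟨0, h0⟩) 0 0 1
        (by simp [vsrc, vtgt])]
      exact FF_zero K t _ _ 1 (by simp [vsrc])
  | rel_comm i j hij =>
      simp only [φ0, map_mul, FreeAlgebra.lift_ι_apply, genF]
      rw [FF_mul K t (vsrc t j) (vtgt t j) (vsrc t j) 0 0 1 (by simp [vsrc, vtgt]),
        FF_mul K t (vtgt t i) (vsrc t i) (vtgt t i) 0 0 1 (by simp [vsrc, vtgt])]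
      have : vsrc t j = vtgt t i := Fin.ext (by simp [vsrc, vtgt]; omega)
      rw [this]

def φR : BoundAlg K t →ₐ[K] Aus K t := RingQuot.liftAlgHom K ⟨φ0 K t, rel_apply K t⟩

lemma φR_mkA (z : FreeAlgebra K (BGen t)) : φR K t (mkA K t z) = φ0 K t z :=
  RingQuot.liftAlgHom_mkAlgHom_apply K _ _ _

lemma phi_eB (m : ℕ) (h : m < t) : φR K t (eB K t m h) = FF K t ⟨m, h⟩ ⟨m, h⟩ 0 := by
  rw [eB, φR_mkA]
  simp only [φ0, FreeAlgebra.lift_ι_apply, genF]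

lemma phi_aB (m : ℕ) (h : m + 1 < t) :
    φR K t (aB K t m h) = FF K t ⟨m, by omega⟩ ⟨m + 1, h⟩ 0 := by
  rw [aB, φR_mkA]
  simp only [φ0, FreeAlgebra.lift_ι_apply, genF]
  rfl

lemma phi_bB (m : ℕ) (h : m + 1 < t) :
    φR K t (bB K t m h) = FF K t ⟨m + 1, h⟩ ⟨m, by omega⟩ 0 := by
  rw [bB, φR_mkA]
  simp only [φ0, FreeAlgebra.lift_ι_apply, genF]
  rfl

lemma phi_eT (m : ℕ) (h : m < t) : φR K t (eT K t m) = FF K t ⟨m, h⟩ ⟨m, h⟩ 0 := by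
  rw [eT, dif_pos h, phi_eB]

lemma phi_aT (m : ℕ) (h : m + 1 < t) :
    φR K t (aT K t m) = FF K t ⟨m, by omega⟩ ⟨m + 1, h⟩ 0 := by
  rw [aT, dif_pos h, phi_aB]

lemma phi_bT (m : ℕ) (h : m + 1 < t) :
    φR K t (bT K t m) = FF K t ⟨m + 1, h⟩ ⟨m, by omega⟩ 0 := by
  rw [bT, dif_pos h, phi_bB]

lemma phi_loopT (m : ℕ) (h : m < t) : φR K t (loopT K t m) = FF K t ⟨m, h⟩ ⟨m, h⟩ 1 := by
  match m with
  | 0 =>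
      show φR K t 0 = _
      rw [map_zero, FF_zero K t _ _ 1 (by simp)]
  | m + 1 =>
      rw [loopT_succ, map_mul, phi_bT K t m h, phi_aT K t m h,
        FF_mul K t ⟨m + 1, h⟩ ⟨m, by omega⟩ ⟨m + 1, h⟩ 0 0 1 (by simp)]

lemma phi_loopT_pow (m k : ℕ) (h : m < t) (hk : 1 ≤ k) :
    φR K t (loopT K t m ^ k) = FF K t ⟨m, h⟩ ⟨m, h⟩ k := by
  induction k with
  | zero => omega
  | succ k ih =>
      by_cases hk1 : 1 ≤ k
      · rw [pow_succ, map_mul, ih hk1, phi_loopT K t m h,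
          FF_mul K t ⟨m, h⟩ ⟨m, h⟩ ⟨m, h⟩ k 1 (k + 1) (by simp)]
      · have : k = 0 := by omega
        subst this
        rw [pow_one, phi_loopT K t m h]

lemma FF_congr (i i' j j' : Fin t) (s : ℕ) (hi : i = i') (hj : j = j') :
    FF K t i j s = FF K t i' j' s := by rw [hi, hj]

lemma phi_ApT (d i : ℕ) (hi : i < t) (h : i + d < t) :
    φR K t (ApT K t d i) = FF K t ⟨i, hi⟩ ⟨i + d, h⟩ 0 := by
  induction d generalizing i with
  | zero => exact phi_eT K t i hi
  | succ d ih =>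
      rw [ApT_succ, map_mul, phi_aT K t i (by omega), ih (i + 1) (by omega) (by omega),
        FF_mul K t ⟨i, hi⟩ ⟨i + 1, by omega⟩ ⟨i + 1 + d, by omega⟩ 0 0 0 (by simp; omega)]
      exact FF_congr K t _ _ _ _ 0 rfl (Fin.ext (by simp; omega))

lemma phi_BpT (d j : ℕ) (hj : j < t) (h : j + d < t) :
    φR K t (BpT K t d j) = FF K t ⟨j + d, h⟩ ⟨j, hj⟩ 0 := by
  induction d with
  | zero => exact phi_eT K t j hj
  | succ d ih =>
      rw [BpT_succ, map_mul, phi_bT K t (j + d) (by omega), ih (by omega),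
        FF_mul K t ⟨j + d + 1, by omega⟩ ⟨j + d, by omega⟩ ⟨j, hj⟩ 0 0 0
          (by simp; omega)]
      exact FF_congr K t _ _ _ _ 0 (Fin.ext (by simp; omega)) rfl

lemma phi_pT (i j : ℕ) (hi : i < t) (hj : j < t) :
    φR K t (pT K t i j) = FF K t ⟨i, hi⟩ ⟨j, hj⟩ 0 := by
  by_cases h : i ≤ j
  · rw [pT_eq_Ap K t i j h, phi_ApT K t (j - i) i hi (by omega)]
    exact FF_congr K t _ _ _ _ 0 rfl (Fin.ext (by simp; omega))
  · rw [pT_eq_Bp K t i j (by omega), phi_BpT K t (i - j) j hj (by omega)]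
    exact FF_congr K t _ _ _ _ 0 (Fin.ext (by simp; omega)) rfl

lemma phi_nT (i j k : ℕ) (hi : i < t) (hj : j < t) :
    φR K t (nT K t i j k) = FF K t ⟨i, hi⟩ ⟨j, hj⟩ k := by
  unfold nT
  by_cases hk : 1 ≤ k
  · rw [map_mul, phi_loopT_pow K t i k hi hk, phi_pT K t i j hi hj,
      FF_mul K t ⟨i, hi⟩ ⟨i, hi⟩ ⟨j, hj⟩ k 0 k (by simp)]
  · have : k = 0 := by omega
    subst this
    rw [pow_zero, one_mul, phi_pT K t i j hi hj]

lemma phi_NF (σ : NIdx t) : φR K t (NF K t σ) = FF K t σ.1 σ.2.1 (σ.2.2 : ℕ) := by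
  rw [NF, phi_nT K t _ _ _ σ.1.isLt σ.2.1.isLt]

end BProof
namespace AusProof

open Paper Polynomial

variable (K : Type) [Field K] (t : ℕ)

/-- the spanning family of `Aus K t`, indexed by `NIdx`. -/
def FFam (σ : BProof.NIdx t) : Aus K t := FF K t σ.1 σ.2.1 (σ.2.2 : ℕ)

lemma poly_trunc (q : Polynomial K) (m0 : ℕ) :
    X ^ m0 ∣ (q - ∑ k ∈ Finset.range m0, Polynomial.C (q.coeff k) * X ^ k) := by
  rw [Polynomial.X_pow_dvd_iff]
  intro l hl
  rw [Polynomial.coeff_sub, Polynomial.finset_sum_coeff]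
  have h1 : ∀ k ∈ Finset.range m0,
      (Polynomial.C (q.coeff k) * X ^ k).coeff l = if l = k then q.coeff k else 0 := by
    intro k _
    rw [Polynomial.coeff_C_mul, Polynomial.coeff_X_pow]
    split_ifs with hkl
    · rw [mul_one]
    · rw [mul_zero]
  rw [Finset.sum_congr rfl h1, Finset.sum_ite_eq (Finset.range m0) l fun k => q.coeff k,
    if_pos (Finset.mem_range.2 hl), sub_self]

lemma smulK (c : K) (f : Aus K t) : c • f = (Polynomial.C c) • f := rfl

/-- the element of `Aus` given by a single "matrix entry" `g : M(j+1) → M(i+1)`. -/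
def matEntry (i j : Fin t) (g : Mq K t j →ₗ[Polynomial K] Mq K t i) : Aus K t :=
  (LinearMap.single (Polynomial K) (Mq K t) i).comp (g.comp (LinearMap.proj j))

lemma smul_FF (c : K) (i j : Fin t) (k : ℕ) :
    c • FF K t i j k = matEntry K t i j (Polynomial.C c • mm K t i j k) :=
  LinearMap.ext fun v => (Pi.single_smul i (Polynomial.C c) (mm K t i j k (v j))).symm

lemma matEntry_sum (i j : Fin t) (s : Finset ℕ)
    (F : ℕ → (Mq K t j →ₗ[Polynomial K] Mq K t i)) :
    matEntry K t i j (∑ k ∈ s, F k) = ∑ k ∈ s, matEntry K t i j (F k) := by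
  apply LinearMap.ext
  intro v
  change (@id (Module.End (Polynomial K) (Nmod K t)) (matEntry K t i j (∑ k ∈ s, F k))) v = (∑ k ∈ s, @id (Module.End (Polynomial K) (Nmod K t)) (matEntry K t i j (F k))) v
  rw [LinearMap.sum_apply]
  show (LinearMap.single (Polynomial K) (Mq K t) i) ((∑ k ∈ s, F k) (v j))
      = ∑ k ∈ s, (LinearMap.single (Polynomial K) (Mq K t) i) ((F k) (v j))
  rw [LinearMap.sum_apply, map_sum]

/-- any "matrix entry" morphism lies in the span of the `FF`s. -/
lemma single_comp_mem (i j : Fin t) (g : Mq K t j →ₗ[Polynomial K] Mq K t i) :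
    matEntry K t i j g ∈ Submodule.span K (Set.range (FFam K t)) := by
  obtain ⟨p, hp⟩ := Submodule.Quotient.mk_surjective _ (g (Submodule.Quotient.mk 1))
  -- `x^(j+1) p` is divisible by `x^(i+1)`
  have hann : (X : Polynomial K) ^ ((i : ℕ) + 1) ∣ X ^ ((j : ℕ) + 1) * p := by
    rw [← Ideal.mem_span_singleton, ← Submodule.Quotient.mk_eq_zero]
    have h2 : (Submodule.Quotient.mk (X ^ ((j : ℕ) + 1) * p) : Mq K t i)
        = ((X ^ ((j : ℕ) + 1) : Polynomial K)) • (Submodule.Quotient.mk p : Mq K t i) := by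
      rw [← Submodule.Quotient.mk_smul, smul_eq_mul]
    rw [h2, hp, ← map_smul]
    have h3 : ((X ^ ((j : ℕ) + 1) : Polynomial K)) • (Submodule.Quotient.mk 1 : Mq K t j)
        = Submodule.Quotient.mk (X ^ ((j : ℕ) + 1)) := by
      rw [← Submodule.Quotient.mk_smul, smul_eq_mul, mul_one]
    rw [h3, Submodule.Quotient.mk_eq_zero _ |>.2, map_zero]
    exact Ideal.mem_span_singleton.2 dvd_rfl
  obtain ⟨q, hq⟩ : ∃ q : Polynomial K, p = X ^ ((i : ℕ) - (j : ℕ)) * q := by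
    by_cases hij : (i : ℕ) ≤ (j : ℕ)
    · exact ⟨p, by rw [Nat.sub_eq_zero_of_le hij, pow_zero, one_mul]⟩
    · obtain ⟨c, hc⟩ := hann
      refine ⟨c, mul_left_cancel₀ (pow_ne_zero ((j : ℕ) + 1) X_ne_zero) ?_⟩
      rw [hc, ← mul_assoc, ← pow_add, show (j : ℕ) + 1 + ((i : ℕ) - (j : ℕ)) = (i : ℕ) + 1
        by omega]
  set m0 : ℕ := min ((i : ℕ) + 1) ((j : ℕ) + 1) with hm0
  set d : ℕ := (i : ℕ) - (j : ℕ) with hd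
  set trunc : Polynomial K := ∑ k ∈ Finset.range m0, Polynomial.C (q.coeff k) * X ^ k
    with htr
  -- the component map `g` agrees with the truncated polynomial combination of the `mm`s
  have hg : g = ∑ k ∈ Finset.range m0, Polynomial.C (q.coeff k) • mm K t i j k := by
    refine Submodule.linearMap_qext _ (LinearMap.ext fun s => ?_)
    simp only [LinearMap.comp_apply, Submodule.mkQ_apply, LinearMap.sum_apply,
      LinearMap.smul_apply, mm_mk]
    have hgs : g (Submodule.Quotient.mk s) = Submodule.Quotient.mk (s * p) := by
      have h5 : (Submodule.Quotient.mk s : Mq K t j) = s • Submodule.Quotient.mk 1 := by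
        rw [← Submodule.Quotient.mk_smul, smul_eq_mul, mul_one]
      rw [h5, map_smul, ← hp, ← Submodule.Quotient.mk_smul, smul_eq_mul]
    rw [hgs]
    have h6 : ∀ k, Polynomial.C (q.coeff k) •
        (Submodule.Quotient.mk (X ^ (k + d) * s) : Mq K t i)
          = Submodule.Quotient.mk ((Polynomial.C (q.coeff k) * X ^ k) * (X ^ d * s)) := by
      intro k
      rw [← Submodule.Quotient.mk_smul, smul_eq_mul]
      congr 1
      ring
    simp_rw [← hd, h6]
    have hS : (Submodule.Quotient.mk (∑ k ∈ Finset.range m0,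
          (Polynomial.C (q.coeff k) * X ^ k) * (X ^ d * s)) : Mq K t i)
        = ∑ k ∈ Finset.range m0, (Submodule.Quotient.mk
            ((Polynomial.C (q.coeff k) * X ^ k) * (X ^ d * s)) : Mq K t i) :=
      map_sum (Submodule.mkQ _) _ _
    rw [← hS, Submodule.Quotient.eq, ← Finset.sum_mul]
    have h7 : s * p - trunc * (X ^ d * s) = (X ^ d * (q - trunc)) * s := by
      rw [hq]; ring
    rw [h7]
    refine Ideal.mem_span_singleton.2 (Dvd.dvd.mul_right ?_ s)
    calc (X : Polynomial K) ^ ((i : ℕ) + 1) ∣ X ^ (d + m0) := pow_dvd_pow _ (by omega)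
      _ ∣ X ^ d * (q - trunc) := by
          rw [pow_add]
          exact mul_dvd_mul_left _ (poly_trunc K q m0)
  -- the claimed equality, now at the level of `Aus`
  have key : matEntry K t i j g = ∑ k ∈ Finset.range m0, q.coeff k • FF K t i j k :=
    calc matEntry K t i j g
        = ∑ k ∈ Finset.range m0,
            matEntry K t i j (Polynomial.C (q.coeff k) • mm K t i j k) := by
          rw [hg, matEntry_sum]
      _ = ∑ k ∈ Finset.range m0, q.coeff k • FF K t i j k :=
          Finset.sum_congr rfl fun k _ => (smul_FF K t (q.coeff k) i j k).symm
  rw [key]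
  refine Submodule.sum_mem _ fun k hk => ?_
  refine Submodule.smul_mem _ _ (Submodule.subset_span ?_)
  exact ⟨⟨i, j, ⟨k, by rw [hm0] at hk; exact Finset.mem_range.1 hk⟩⟩, rfl⟩

end AusProof
namespace AusProof

open Paper Polynomial

variable (K : Type) [Field K] (t : ℕ)

/-- evaluation at a vector, as an additive map on `Aus`. -/
def evalA (v : Nmod K t) : Aus K t →+ Nmod K t where
  toFun F := (show Nmod K t →ₗ[Polynomial K] Nmod K t from F) v
  map_zero' := rfl
  map_add' _ _ := rfl

lemma evalA_matEntry (v : Nmod K t) (i j : Fin t) (g : Mq K t j →ₗ[Polynomial K] Mq K t i) :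
    evalA K t v (matEntry K t i j g) = Pi.single i (g (v j)) := rfl

lemma smul_FFam (c : K) (σ : BProof.NIdx t) :
    c • FFam K t σ = matEntry K t σ.1 σ.2.1 (Polynomial.C c • mm K t σ.1 σ.2.1 (σ.2.2 : ℕ)) :=
  smul_FF K t c σ.1 σ.2.1 (σ.2.2 : ℕ)

lemma Aus_decomp (f : Aus K t) :
    f = ∑ i : Fin t, ∑ j : Fin t, matEntry K t i j
      ((LinearMap.proj i).comp ((show Nmod K t →ₗ[Polynomial K] Nmod K t from f).comp
        (LinearMap.single (Polynomial K) (Mq K t) j))) := by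
  apply LinearMap.ext
  intro v
  obtain ⟨f, rfl⟩ : ∃ F : Module.End (Polynomial K) (Nmod K t), F = f := ⟨f, rfl⟩
  show evalA K t v f = evalA K t v _
  rw [map_sum]
  simp_rw [map_sum (evalA K t v), evalA_matEntry, LinearMap.comp_apply, LinearMap.proj_apply,
    LinearMap.coe_single]
  have h1 : ∀ i : Fin t, (∑ j : Fin t, Pi.single i
        ((show Nmod K t →ₗ[Polynomial K] Nmod K t from f) (Pi.single j (v j)) i) : Nmod K t)
      = Pi.single i ((show Nmod K t →ₗ[Polynomial K] Nmod K t from f) v i) := by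
    intro i
    have h2 : (∑ j : Fin t, Pi.single i
          ((show Nmod K t →ₗ[Polynomial K] Nmod K t from f) (Pi.single j (v j)) i) : Nmod K t)
        = (LinearMap.single (Polynomial K) (Mq K t) i) (∑ j : Fin t,
            (show Nmod K t →ₗ[Polynomial K] Nmod K t from f) (Pi.single j (v j)) i) := by
      rw [map_sum]
      rfl
    rw [h2, ← Finset.sum_apply i Finset.univ fun j =>
        (show Nmod K t →ₗ[Polynomial K] Nmod K t from f) (Pi.single j (v j)),
      ← map_sum (show Nmod K t →ₗ[Polynomial K] Nmod K t from f)
        (fun j => Pi.single j (v j)) Finset.univ, Finset.univ_sum_single]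
    rfl
  simp_rw [h1]
  rw [Finset.univ_sum_single]
  rfl

lemma Aus_mem_span (f : Aus K t) : f ∈ Submodule.span K (Set.range (FFam K t)) := by
  rw [Aus_decomp K t f]
  exact Submodule.sum_mem _ fun i _ => Submodule.sum_mem _ fun j _ => single_comp_mem K t i j _

lemma indep (c : BProof.NIdx t → K) (hc : ∑ σ : BProof.NIdx t, c σ • FFam K t σ = 0)
    (σ0 : BProof.NIdx t) : c σ0 = 0 := by
  classical
  obtain ⟨i0, j0, k0⟩ := σ0
  set v : Nmod K t := Pi.single j0 (Submodule.Quotient.mk 1) with hv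
  have hc' : ∑ σ : BProof.NIdx t, matEntry K t σ.1 σ.2.1
      (Polynomial.C (c σ) • mm K t σ.1 σ.2.1 (σ.2.2 : ℕ)) = 0 := by
    rw [← hc]
    exact (Finset.sum_congr rfl fun σ _ => (smul_FFam K t (c σ) σ).symm)
  have h1 := congrArg (evalA K t v) hc'
  rw [map_sum, map_zero] at h1
  simp_rw [evalA_matEntry, LinearMap.smul_apply] at h1
  have h2 := congrFun h1 i0
  rw [Finset.sum_apply, Pi.zero_apply] at h2
  rw [← Finset.univ_sigma_univ, Finset.sum_sigma] at h2
  rw [Finset.sum_eq_single i0 (fun i _ hne =>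
      Finset.sum_eq_zero fun σ _ => Pi.single_eq_of_ne (Ne.symm hne) _)
    (fun habs => absurd (Finset.mem_univ i0) habs)] at h2
  simp_rw [Pi.single_eq_same] at h2
  rw [← Finset.univ_sigma_univ, Finset.sum_sigma] at h2
  rw [Finset.sum_eq_single j0 (fun j _ hne =>
      Finset.sum_eq_zero fun k _ => by
        rw [show v j = 0 from Pi.single_eq_of_ne hne _, map_zero, smul_zero])
    (fun habs => absurd (Finset.mem_univ j0) habs)] at h2
  simp_rw [show v j0 = Submodule.Quotient.mk 1 from Pi.single_eq_same _ _, mm_mk, mul_one]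
    at h2
  have h3 : ∀ k : Fin (min ((i0 : ℕ) + 1) ((j0 : ℕ) + 1)),
      Polynomial.C (c ⟨i0, j0, k⟩) •
          (Submodule.Quotient.mk (X ^ ((k : ℕ) + ((i0 : ℕ) - (j0 : ℕ)))) : Mq K t i0)
        = Submodule.Quotient.mk (Polynomial.C (c ⟨i0, j0, k⟩)
            * X ^ ((k : ℕ) + ((i0 : ℕ) - (j0 : ℕ)))) := by
    intro k
    rw [← Submodule.Quotient.mk_smul, smul_eq_mul]
  simp_rw [h3] at h2
  have hS : (∑ k : Fin (min ((i0 : ℕ) + 1) ((j0 : ℕ) + 1)), (Submodule.Quotient.mk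
        (Polynomial.C (c ⟨i0, j0, k⟩) * X ^ ((k : ℕ) + ((i0 : ℕ) - (j0 : ℕ)))) : Mq K t i0))
      = Submodule.Quotient.mk (∑ k : Fin (min ((i0 : ℕ) + 1) ((j0 : ℕ) + 1)),
          Polynomial.C (c ⟨i0, j0, k⟩) * X ^ ((k : ℕ) + ((i0 : ℕ) - (j0 : ℕ)))) :=
    (map_sum (Submodule.mkQ _) _ _).symm
  rw [hS, Submodule.Quotient.mk_eq_zero] at h2
  have hdvd : (X : Polynomial K) ^ ((i0 : ℕ) + 1) ∣
      ∑ k : Fin (min ((i0 : ℕ) + 1) ((j0 : ℕ) + 1)),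
        Polynomial.C (c ⟨i0, j0, k⟩) * X ^ ((k : ℕ) + ((i0 : ℕ) - (j0 : ℕ))) :=
    Ideal.mem_span_singleton.1 h2
  rw [Polynomial.X_pow_dvd_iff] at hdvd
  have hk0 := k0.isLt
  rw [Nat.lt_min] at hk0
  have hco := hdvd ((k0 : ℕ) + ((i0 : ℕ) - (j0 : ℕ))) (by omega)
  rw [Polynomial.finset_sum_coeff] at hco
  have h4 : ∀ k : Fin (min ((i0 : ℕ) + 1) ((j0 : ℕ) + 1)),
      (Polynomial.C (c ⟨i0, j0, k⟩) * X ^ ((k : ℕ) + ((i0 : ℕ) - (j0 : ℕ)))).coeff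
          ((k0 : ℕ) + ((i0 : ℕ) - (j0 : ℕ)))
        = if k = k0 then c ⟨i0, j0, k⟩ else 0 := by
    intro k
    rw [Polynomial.coeff_C_mul, Polynomial.coeff_X_pow]
    by_cases hkk : k = k0
    · rw [if_pos (by rw [hkk]), if_pos hkk, mul_one]
    · rw [if_neg (fun habs => hkk (Fin.ext (by omega))), if_neg hkk, mul_zero]
  rw [Finset.sum_congr rfl fun k _ => h4 k, Finset.sum_ite_eq' Finset.univ k0
    (fun k => c ⟨i0, j0, k⟩), if_pos (Finset.mem_univ k0)] at hco
  exact hco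

end AusProof


open CategoryTheory CategoryTheory.Limits Paper in
/-- The Auslander algebra `A_t` of `K[x]/(x^t)` is isomorphic to the bound path algebra of the
quiver `1 ⇄ 2 ⇄ ⋯ ⇄ t` with relations `a_1 b_1 = 0` and `a_(i+1) b_(i+1) = b_i a_i`. -/
theorem stmt1 (K : Type) [Field K] [IsAlgClosed K] (t : ℕ) (ht : 1 ≤ t) :
    Nonempty (Aus K t ≃ₐ[K] BoundAlg K t) := by
  refine ⟨(AlgEquiv.ofBijective (BProof.φR K t) ⟨?_, ?_⟩).symm⟩
  · rw [injective_iff_map_eq_zero]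
    intro x hx
    obtain ⟨cc, hcc⟩ := (Submodule.mem_span_range_iff_exists_fun K).1 (BProof.NSpan_top K t x)
    have h0 : ∑ σ : BProof.NIdx t, cc σ • AusProof.FFam K t σ = 0 := by
      have hφ := congrArg (BProof.φR K t) hcc
      rw [map_sum] at hφ
      simp_rw [map_smul, BProof.phi_NF] at hφ
      rw [hx] at hφ
      exact hφ
    have hz : ∀ σ, cc σ = 0 := fun σ => AusProof.indep K t cc h0 σ
    rw [← hcc]
    simp [hz]
  · intro f
    have hle : Submodule.span K (Set.range (AusProof.FFam K t))
        ≤ LinearMap.range (BProof.φR K t).toLinearMap := by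
      rw [Submodule.span_le]
      rintro _ ⟨σ, rfl⟩
      exact ⟨BProof.NF K t σ, BProof.phi_NF K t σ⟩
    obtain ⟨x, hx⟩ := hle (AusProof.Aus_mem_span K t f)
    exact ⟨x, hx⟩
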